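/- arXiv:1102.0338 — 2 statements merged into one kernel-verified Lean document; each statement's English description precedes it below -/
import Mathlib

section
/- Let φ be analytic on the unit disk 𝔻 with φ(0) = 1, and define A(s) = sup_{|z|=s} |2zφ'(z) + 1 − φ(z)²|, B(s) = sup_{|z|=s} |φ'(z)|, F(s,t) = ((1−t²)²/(2t²)) A(s) + (1−t²)(1 − s²/t²) B(s), and N(φ) = sup_{0<s<t<1} F(s,t). If f is analytic on 𝔻 with f(0)=0, f'(0)=1, f' nonvanishing, and 1 + z f''(z)/f'(z) is subordinate to φ (i.e. equals φ(ω(z)) for some analytic ω : 𝔻 → 𝔻 with ω(0)=0), then ‖S_f‖ = sup_{z∈𝔻} (1−|z|²)² |S_f(z)| ≤ N(φ). -/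
/-!
At `z ≠ 0`, with `w = ω z`, differentiating `z f''/f' = φ ∘ ω - 1` gives
`z² S_f(z) = ½ (2 w φ'(w) + 1 - φ(w)²) + (z ω'(z) - ω(z)) φ'(w)`.
Schwarz–Pick for `ω(z)/z` gives `|z ω'(z) - ω(z)| (1 - |z|²) ≤ |z|² - |w|²`, so
`(1 - |z|²)² |S_f(z)|` is at most the term of `F(|w|, |z|)` taken at the single point `w`.
As `|w| ≤ |z|` (Schwarz lemma) this is at most `N(φ)`, the endpoint cases `|w| ∈ {0, |z|}`
following by continuity in `w`; the point `z = 0` follows by continuity of `S_f`.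
-/

open Metric
open scoped ENNReal

/-- `A(s) = sup_{|z|=s} |2 z φ'(z) + 1 - φ(z)²|`, as an extended real number. -/
noncomputable def schwarzA (φ : ℂ → ℂ) (s : ℝ) : ℝ≥0∞ :=
  ⨆ z ∈ {z : ℂ | ‖z‖ = s},
    ENNReal.ofReal ‖2 * z * deriv φ z + 1 - φ z ^ 2‖

/-- `B(s) = sup_{|z|=s} |φ'(z)|`, as an extended real number. -/
noncomputable def schwarzB (φ : ℂ → ℂ) (s : ℝ) : ℝ≥0∞ :=
  ⨆ z ∈ {z : ℂ | ‖z‖ = s}, ENNReal.ofReal ‖deriv φ z‖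

/-- `F(s,t) = ((1-t²)²/(2t²)) A(s) + (1-t²)(1 - s²/t²) B(s)`. -/
noncomputable def schwarzF (φ : ℂ → ℂ) (s t : ℝ) : ℝ≥0∞ :=
  ENNReal.ofReal ((1 - t ^ 2) ^ 2 / (2 * t ^ 2)) * schwarzA φ s
    + ENNReal.ofReal ((1 - t ^ 2) * (1 - s ^ 2 / t ^ 2)) * schwarzB φ s

/-- `N(φ) = sup_{0 < s < t < 1} F(s,t)`. -/
noncomputable def schwarzN (φ : ℂ → ℂ) : ℝ≥0∞ :=
  ⨆ (s : ℝ) (t : ℝ) (_ : 0 < s) (_ : s < t) (_ : t < 1), schwarzF φ s t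

open Complex ComplexConjugate Set Filter Topology

theorem mem_closure_ball_inter_compl_zero {E : Type*} [NormedAddCommGroup E] [NormedSpace ℝ E]
    [Nontrivial E] {r : ℝ} (hr : r ≠ 0) {w : E} (hw : ‖w‖ ≤ r) :
    w ∈ closure (ball (0 : E) r ∩ {0}ᶜ) := by
  have : closure (ball (0 : E) r) ⊆ closure (ball 0 r ∩ {0}ᶜ) :=
    closure_minimal ((dense_compl_singleton 0).open_subset_closure_inter isOpen_ball)
      isClosed_closure
  exact this (by rwa [closure_ball 0 hr, mem_closedBall_zero_iff])

noncomputable def mobius (c z : ℂ) : ℂ := (c - z) / (1 - conj c * z)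

theorem one_sub_conj_mul_ne_zero {c z : ℂ} (hc : ‖c‖ < 1) (hz : ‖z‖ ≤ 1) :
    1 - conj c * z ≠ 0 := by
  refine sub_ne_zero.mpr fun h => ?_
  have : ‖conj c * z‖ < 1 := by
    rw [norm_mul, norm_conj]
    nlinarith [norm_nonneg c, norm_nonneg z]
  simp [← h] at this

theorem normSq_one_sub_conj_mul_sub_normSq_sub (c z : ℂ) :
    normSq (1 - conj c * z) - normSq (c - z) = (1 - normSq c) * (1 - normSq z) := by
  simp only [normSq_apply, sub_re, sub_im, mul_re, mul_im, conj_re, conj_im, one_re, one_im]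
  ring

theorem norm_mobius_lt_one {c z : ℂ} (hc : ‖c‖ < 1) (hz : ‖z‖ < 1) : ‖mobius c z‖ < 1 := by
  have hden := one_sub_conj_mul_ne_zero hc hz.le
  rw [mobius, norm_div, div_lt_one (norm_pos_iff.mpr hden), ← sq_lt_sq₀ (norm_nonneg _)
    (norm_nonneg _), Complex.sq_norm, Complex.sq_norm, ← sub_pos,
    normSq_one_sub_conj_mul_sub_normSq_sub, ← Complex.sq_norm, ← Complex.sq_norm]
  have := pow_lt_one₀ (norm_nonneg c) hc two_ne_zero
  have := pow_lt_one₀ (norm_nonneg z) hz two_ne_zero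
  apply mul_pos <;> linarith

theorem mapsTo_mobius {c : ℂ} (hc : ‖c‖ < 1) : MapsTo (mobius c) (ball 0 1) (ball 0 1) := by
  intro z hz
  rw [mem_ball_zero_iff] at hz ⊢
  exact norm_mobius_lt_one hc hz

theorem mobius_zero (c : ℂ) : mobius c 0 = c := by simp [mobius]

theorem mobius_self (c : ℂ) : mobius c c = 0 := by simp [mobius]

theorem hasDerivAt_mobius {c z : ℂ} (hden : 1 - conj c * z ≠ 0) :
    HasDerivAt (mobius c) ((‖c‖ ^ 2 - 1) / (1 - conj c * z) ^ 2) z := by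
  have h := ((hasDerivAt_id z).const_sub c).div
    (((hasDerivAt_id z).const_mul (conj c)).const_sub 1) hden
  refine h.congr_deriv ?_
  rw [← conj_mul']
  simp only [id]
  ring

theorem hasDerivAt_mobius_zero {c : ℂ} : HasDerivAt (mobius c) (‖c‖ ^ 2 - 1) 0 := by
  simpa using hasDerivAt_mobius (c := c) (z := 0) (by simp)

theorem hasDerivAt_mobius_self {c : ℂ} (hc : ‖c‖ < 1) :
    HasDerivAt (mobius c) (-(1 - ‖c‖ ^ 2 : ℂ)⁻¹) c := by
  have hden := one_sub_conj_mul_ne_zero hc hc.le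
  convert hasDerivAt_mobius hden using 1
  rw [conj_mul'] at hden ⊢
  field_simp
  ring

theorem differentiableOn_mobius {c : ℂ} (hc : ‖c‖ < 1) : DifferentiableOn ℂ (mobius c) (ball 0 1) :=
  fun _ hz => (hasDerivAt_mobius (one_sub_conj_mul_ne_zero hc
    (mem_ball_zero_iff.mp hz).le)).differentiableAt.differentiableWithinAt

theorem norm_one_sub_sq_norm {x : ℂ} (hx : ‖x‖ < 1) : ‖(1 - ‖x‖ ^ 2 : ℂ)‖ = 1 - ‖x‖ ^ 2 := by
  have : (0 : ℝ) ≤ 1 - ‖x‖ ^ 2 := by nlinarith [norm_nonneg x]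
  rw [← Real.norm_of_nonneg this, ← Complex.norm_real]
  push_cast
  rfl

theorem norm_deriv_mul_one_sub_sq_le_of_mapsTo_ball {ψ : ℂ → ℂ}
    (hψ : DifferentiableOn ℂ ψ (ball 0 1)) (hmaps : MapsTo ψ (ball 0 1) (ball 0 1)) {z : ℂ}
    (hz : z ∈ ball 0 1) : ‖deriv ψ z‖ * (1 - ‖z‖ ^ 2) ≤ 1 - ‖ψ z‖ ^ 2 := by
  have hz' : ‖z‖ < 1 := mem_ball_zero_iff.mp hz
  have ha : ‖ψ z‖ < 1 := mem_ball_zero_iff.mp (hmaps hz)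
  set g := mobius (ψ z) ∘ ψ ∘ mobius z
  have hg : DifferentiableOn ℂ g (ball 0 1) :=
    (differentiableOn_mobius ha).comp (hψ.comp (differentiableOn_mobius hz') (mapsTo_mobius hz'))
      (hmaps.comp (mapsTo_mobius hz'))
  have hg0 : g 0 = 0 := by simp [g, mobius_zero, mobius_self]
  have hgmaps : MapsTo g (ball 0 1) (closedBall (g 0) 1) := by
    rw [hg0]
    exact ((mapsTo_mobius ha).comp (hmaps.comp (mapsTo_mobius hz'))).mono_right
      ball_subset_closedBall
  have hg' : HasDerivAt g (-(1 - ‖ψ z‖ ^ 2 : ℂ)⁻¹ * deriv ψ z * (‖z‖ ^ 2 - 1)) 0 :=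
    ((hasDerivAt_mobius_self ha).comp z (hψ.differentiableAt (isOpen_ball.mem_nhds hz)).hasDerivAt
      ).comp_of_eq 0 hasDerivAt_mobius_zero (mobius_zero z).symm
  have hschwarz := Complex.norm_deriv_le_one_of_mapsTo_ball hg hgmaps one_pos
  rw [hg'.deriv, norm_mul, norm_mul, norm_neg, norm_inv, norm_one_sub_sq_norm ha, norm_sub_rev,
    norm_one_sub_sq_norm hz', ← div_eq_inv_mul, div_mul_eq_mul_div] at hschwarz
  have : 0 < 1 - ‖ψ z‖ ^ 2 := by nlinarith [norm_nonneg (ψ z)]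
  rwa [div_le_one this] at hschwarz

theorem norm_deriv_mul_one_sub_sq_le_of_mapsTo_closedBall {ψ : ℂ → ℂ}
    (hψ : DifferentiableOn ℂ ψ (ball 0 1)) (hmaps : MapsTo ψ (ball 0 1) (closedBall 0 1)) {z : ℂ}
    (hz : z ∈ ball 0 1) : ‖deriv ψ z‖ * (1 - ‖z‖ ^ 2) ≤ 1 - ‖ψ z‖ ^ 2 := by
  by_cases hopen : MapsTo ψ (ball 0 1) (ball 0 1)
  · exact norm_deriv_mul_one_sub_sq_le_of_mapsTo_ball hψ hopen hz
  obtain ⟨v, hv, hv1⟩ : ∃ v ∈ ball (0 : ℂ) 1, ‖ψ v‖ = 1 := by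
    simp only [MapsTo, not_forall, mem_ball_zero_iff, not_lt] at hopen
    obtain ⟨v, hv, hv1⟩ := hopen
    exact ⟨v, mem_ball_zero_iff.mpr hv, le_antisymm (mem_closedBall_zero_iff.mp
      (hmaps (mem_ball_zero_iff.mpr hv))) hv1⟩
  have hconst := Complex.eq_const_of_exists_max hψ hv fun y hy => by
    simpa [hv1] using mem_closedBall_zero_iff.mp (hmaps hy)
  have hderiv : deriv ψ z = 0 := by
    rw [EventuallyEq.deriv_eq (f := fun _ => ψ v)
      (eventually_of_mem (isOpen_ball.mem_nhds hz) hconst), deriv_const]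
  simp [hderiv, hconst hz, hv1]

theorem norm_mul_deriv_sub_mul_one_sub_sq_le {ω : ℂ → ℂ} (hω : DifferentiableOn ℂ ω (ball 0 1))
    (hmaps : MapsTo ω (ball 0 1) (closedBall 0 1)) (h0 : ω 0 = 0) {z : ℂ} (hz : z ∈ ball 0 1) :
    ‖z * deriv ω z - ω z‖ * (1 - ‖z‖ ^ 2) ≤ ‖z‖ ^ 2 - ‖ω z‖ ^ 2 := by
  set ψ := dslope ω 0
  have hψ : DifferentiableOn ℂ ψ (ball 0 1) :=
    (Complex.differentiableOn_dslope (ball_mem_nhds _ one_pos)).mpr hω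
  have hψmaps : MapsTo ψ (ball 0 1) (closedBall 0 1) := fun y hy => by
    simpa using Complex.norm_dslope_le_div_of_mapsTo_ball hω (by rwa [h0]) hy
  have hωψ : ω = fun y => y * ψ y := funext fun y => by
    simpa [h0] using (sub_smul_dslope ω 0 y).symm
  have hderiv : deriv ω z = ψ z + z * deriv ψ z := by
    rw [hωψ]
    exact ((hasDerivAt_id z).mul (hψ.differentiableAt (isOpen_ball.mem_nhds hz)).hasDerivAt
      ).deriv.trans (by simp)
  have key : z * deriv ω z - ω z = z ^ 2 * deriv ψ z := by
    rw [hderiv, hωψ]; ring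
  have hpick := norm_deriv_mul_one_sub_sq_le_of_mapsTo_closedBall hψ hψmaps hz
  rw [key, norm_mul, norm_pow, hωψ, norm_mul]
  nlinarith [sq_nonneg ‖z‖]

noncomputable def schwarzian {𝕜 : Type*} [NontriviallyNormedField 𝕜] (f : 𝕜 → 𝕜) (z : 𝕜) : 𝕜 :=
  deriv (deriv (deriv f)) z / deriv f z - (3 / 2) * (deriv (deriv f) z / deriv f z) ^ 2

theorem schwarzian_eq_of_eventually_mul_eq {𝕜 : Type*} [NontriviallyNormedField 𝕜] [CharZero 𝕜]
    {f p : 𝕜 → 𝕜} {z p' : 𝕜} (hz : z ≠ 0) (hf'z : deriv f z ≠ 0)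
    (hf' : DifferentiableAt 𝕜 (deriv f) z) (hf'' : DifferentiableAt 𝕜 (deriv (deriv f)) z)
    (hp : HasDerivAt p p' z) (h : ∀ᶠ y in 𝓝 z, y * deriv (deriv f) y = (p y - 1) * deriv f y) :
    schwarzian f z = (z * p' + (1 - p z ^ 2) / 2) / z ^ 2 := by
  have hderiv : deriv (deriv f) z + z * deriv (deriv (deriv f)) z
      = p' * deriv f z + (p z - 1) * deriv (deriv f) z := by
    have hl := (hasDerivAt_id' z).mul hf''.hasDerivAt
    have hr := (hp.sub_const 1).mul hf'.hasDerivAt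
    simpa using (hl.congr_of_eventuallyEq (h.mono fun y hy => hy.symm)).unique hr
  have h2 : deriv (deriv f) z = (p z - 1) * deriv f z / z := by
    rw [eq_div_iff hz, mul_comm, h.self_of_nhds]
  have h3 : deriv (deriv (deriv f)) z = (p' * deriv f z + (p z - 2) * deriv (deriv f) z) / z := by
    rw [eq_div_iff hz]
    linear_combination hderiv
  rw [schwarzian, h3, h2]
  field_simp
  ring

theorem continuousAt_schwarzian {f : ℂ → ℂ} {U : Set ℂ} (hf : DifferentiableOn ℂ f U)
    (hU : IsOpen U) {z : ℂ} (hz : z ∈ U) (hf' : deriv f z ≠ 0) :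
    ContinuousAt (schwarzian f) z := by
  have hcont : ∀ {g : ℂ → ℂ}, DifferentiableOn ℂ g U → ContinuousAt g z := fun hg =>
    (hg.differentiableAt (hU.mem_nhds hz)).continuousAt
  have h1 := hcont (hf.deriv hU)
  have h2 := hcont ((hf.deriv hU).deriv hU)
  have h3 := hcont (((hf.deriv hU).deriv hU).deriv hU)
  unfold schwarzian
  fun_prop (disch := assumption)

noncomputable def schwarzFAt (φ : ℂ → ℂ) (w : ℂ) (t : ℝ) : ℝ :=
  (1 - t ^ 2) ^ 2 / (2 * t ^ 2) * ‖2 * w * deriv φ w + 1 - φ w ^ 2‖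
    + (1 - t ^ 2) * (1 - ‖w‖ ^ 2 / t ^ 2) * ‖deriv φ w‖

theorem ofReal_schwarzFAt_le_schwarzF (φ : ℂ → ℂ) {w : ℂ} {t : ℝ} (hwt : ‖w‖ ≤ t) (ht : t < 1) :
    ENNReal.ofReal (schwarzFAt φ w t) ≤ schwarzF φ ‖w‖ t := by
  have hA : ENNReal.ofReal ‖2 * w * deriv φ w + 1 - φ w ^ 2‖ ≤ schwarzA φ ‖w‖ :=
    le_iSup₂ (f := fun z (_ : z ∈ {z : ℂ | ‖z‖ = ‖w‖}) =>
      ENNReal.ofReal ‖2 * z * deriv φ z + 1 - φ z ^ 2‖) w rfl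
  have hB : ENNReal.ofReal ‖deriv φ w‖ ≤ schwarzB φ ‖w‖ :=
    le_iSup₂ (f := fun z (_ : z ∈ {z : ℂ | ‖z‖ = ‖w‖}) => ENNReal.ofReal ‖deriv φ z‖) w rfl
  have ht0 : 0 ≤ t := (norm_nonneg w).trans hwt
  have hcoeff : 0 ≤ (1 - t ^ 2) * (1 - ‖w‖ ^ 2 / t ^ 2) := by
    have : ‖w‖ ^ 2 / t ^ 2 ≤ 1 := div_le_one_of_le₀ (by gcongr) (sq_nonneg t)
    have : t ^ 2 ≤ 1 := by nlinarith
    apply mul_nonneg <;> linarith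
  rw [schwarzFAt, schwarzF, ENNReal.ofReal_add (by positivity) (by positivity),
    ENNReal.ofReal_mul (by positivity), ENNReal.ofReal_mul hcoeff]
  gcongr

theorem schwarzF_le_schwarzN (φ : ℂ → ℂ) {s t : ℝ} (hs : 0 < s) (hst : s < t) (ht : t < 1) :
    schwarzF φ s t ≤ schwarzN φ :=
  le_iSup_of_le s <| le_iSup_of_le t <| le_iSup_of_le hs <| le_iSup_of_le hst <|
    le_iSup_of_le ht le_rfl

theorem continuousAt_schwarzFAt {φ : ℂ → ℂ} (hφ : DifferentiableOn ℂ φ (ball 0 1)) {w : ℂ}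
    (hw : w ∈ ball 0 1) (t : ℝ) : ContinuousAt (fun v => schwarzFAt φ v t) w := by
  have hφw : ContinuousAt φ w := (hφ.differentiableAt (isOpen_ball.mem_nhds hw)).continuousAt
  have hφ'w : ContinuousAt (deriv φ) w :=
    ((hφ.deriv isOpen_ball).differentiableAt (isOpen_ball.mem_nhds hw)).continuousAt
  unfold schwarzFAt
  fun_prop

theorem ofReal_schwarzFAt_le_schwarzN {φ : ℂ → ℂ} (hφ : DifferentiableOn ℂ φ (ball 0 1))
    {w : ℂ} {t : ℝ} (hwt : ‖w‖ ≤ t) (ht0 : 0 < t) (ht1 : t < 1) :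
    ENNReal.ofReal (schwarzFAt φ w t) ≤ schwarzN φ := by
  have hw : w ∈ ball (0 : ℂ) 1 := mem_ball_zero_iff.mpr (hwt.trans_lt ht1)
  have hcont : ContinuousAt (fun v => ENNReal.ofReal (schwarzFAt φ v t)) w :=
    ENNReal.continuous_ofReal.continuousAt.comp (continuousAt_schwarzFAt hφ hw t)
  refine ContinuousWithinAt.closure_le (mem_closure_ball_inter_compl_zero ht0.ne' hwt)
    hcont.continuousWithinAt continuousWithinAt_const ?_
  rintro y ⟨hy, hy0⟩
  rw [mem_ball_zero_iff] at hy
  exact (ofReal_schwarzFAt_le_schwarzF φ hy.le ht1).trans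
    (schwarzF_le_schwarzN φ (norm_pos_iff.mpr hy0) hy ht1)

theorem schwarzian_eq_of_subordinate {φ f ω : ℂ → ℂ} (hφ : DifferentiableOn ℂ φ (ball 0 1))
    (hf : DifferentiableOn ℂ f (ball 0 1)) (hf' : ∀ z ∈ ball (0 : ℂ) 1, deriv f z ≠ 0)
    (hω : DifferentiableOn ℂ ω (ball 0 1)) (hωmap : MapsTo ω (ball 0 1) (ball 0 1))
    (hsub : ∀ z ∈ ball (0 : ℂ) 1, 1 + z * deriv (deriv f) z / deriv f z = φ (ω z))
    {z : ℂ} (hz : z ∈ ball 0 1) (hz0 : z ≠ 0) :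
    schwarzian f z = ((2 * ω z * deriv φ (ω z) + 1 - φ (ω z) ^ 2) / 2
      + (z * deriv ω z - ω z) * deriv φ (ω z)) / z ^ 2 := by
  have hdiff : ∀ {g : ℂ → ℂ} {x : ℂ}, DifferentiableOn ℂ g (ball 0 1) → x ∈ ball (0 : ℂ) 1 →
      DifferentiableAt ℂ g x := fun hg hx => hg.differentiableAt (isOpen_ball.mem_nhds hx)
  have hrel : ∀ᶠ y in 𝓝 z, y * deriv (deriv f) y = (φ (ω y) - 1) * deriv f y := by
    filter_upwards [isOpen_ball.mem_nhds hz] with y hy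
    rw [← hsub y hy]
    field_simp [hf' y hy]
    ring
  rw [schwarzian_eq_of_eventually_mul_eq hz0 (hf' z hz) (hdiff (hf.deriv isOpen_ball) hz)
    (hdiff ((hf.deriv isOpen_ball).deriv isOpen_ball) hz)
    ((hdiff hφ (hωmap hz)).hasDerivAt.comp z (hdiff hω hz).hasDerivAt) hrel, Function.comp_apply]
  ring

theorem sq_one_sub_sq_mul_norm_schwarzian_le {φ f ω : ℂ → ℂ}
    (hφ : DifferentiableOn ℂ φ (ball 0 1))
    (hf : DifferentiableOn ℂ f (ball 0 1)) (hf' : ∀ z ∈ ball (0 : ℂ) 1, deriv f z ≠ 0)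
    (hω : DifferentiableOn ℂ ω (ball 0 1)) (hωmap : MapsTo ω (ball 0 1) (ball 0 1))
    (hω0 : ω 0 = 0)
    (hsub : ∀ z ∈ ball (0 : ℂ) 1, 1 + z * deriv (deriv f) z / deriv f z = φ (ω z))
    {z : ℂ} (hz : z ∈ ball 0 1) (hz0 : z ≠ 0) :
    (1 - ‖z‖ ^ 2) ^ 2 * ‖schwarzian f z‖ ≤ schwarzFAt φ (ω z) ‖z‖ := by
  have hdieudonne := norm_mul_deriv_sub_mul_one_sub_sq_le hω
    (hωmap.mono_right ball_subset_closedBall) hω0 hz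
  rw [schwarzian_eq_of_subordinate hφ hf hf' hω hωmap hsub hz hz0]
  set t := ‖z‖
  set a := ‖2 * ω z * deriv φ (ω z) + 1 - φ (ω z) ^ 2‖
  set b := ‖deriv φ (ω z)‖
  set d := ‖z * deriv ω z - ω z‖
  have ht0 : 0 < t := norm_pos_iff.mpr hz0
  have ht1 : 0 ≤ 1 - t ^ 2 := by nlinarith [mem_ball_zero_iff.mp hz]
  calc (1 - t ^ 2) ^ 2 * ‖((2 * ω z * deriv φ (ω z) + 1 - φ (ω z) ^ 2) / 2
        + (z * deriv ω z - ω z) * deriv φ (ω z)) / z ^ 2‖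
      ≤ (1 - t ^ 2) ^ 2 * ((a / 2 + d * b) / t ^ 2) := by
        rw [norm_div, norm_pow]
        gcongr
        refine (norm_add_le _ _).trans ?_
        rw [norm_div, norm_mul, Complex.norm_two]
    _ = (1 - t ^ 2) ^ 2 / (2 * t ^ 2) * a + (1 - t ^ 2) / t ^ 2 * (d * (1 - t ^ 2)) * b := by
        field_simp
    _ ≤ (1 - t ^ 2) ^ 2 / (2 * t ^ 2) * a + (1 - t ^ 2) / t ^ 2 * (t ^ 2 - ‖ω z‖ ^ 2) * b := by
        gcongr
    _ = schwarzFAt φ (ω z) t := by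
        rw [schwarzFAt]
        field_simp
        rfl

theorem schwarzian_norm_le_of_MaMinda_convex_general (φ : ℂ → ℂ)
    (hφ : DifferentiableOn ℂ φ (ball (0:ℂ) 1))
    (f : ℂ → ℂ) (hf : DifferentiableOn ℂ f (ball (0:ℂ) 1))
    (hf' : ∀ z ∈ ball (0:ℂ) 1, deriv f z ≠ 0)
    (ω : ℂ → ℂ) (hω : DifferentiableOn ℂ ω (ball (0:ℂ) 1))
    (hωmap : ∀ z ∈ ball (0:ℂ) 1, ω z ∈ ball (0:ℂ) 1) (hω0 : ω 0 = 0)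
    (hsub : ∀ z ∈ ball (0:ℂ) 1,
      1 + z * deriv (deriv f) z / deriv f z = φ (ω z)) :
    ∀ z ∈ ball (0:ℂ) 1,
      ENNReal.ofReal ((1 - ‖z‖ ^ 2) ^ 2 *
        ‖deriv (deriv (deriv f)) z / deriv f z
          - (3 / 2) * (deriv (deriv f) z / deriv f z) ^ 2‖) ≤ schwarzN φ := by
  intro z hz
  have hbound : ∀ y ∈ ball (0 : ℂ) 1 ∩ {0}ᶜ,
      ENNReal.ofReal ((1 - ‖y‖ ^ 2) ^ 2 * ‖schwarzian f y‖) ≤ schwarzN φ := by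
    rintro y ⟨hy, hy0⟩
    have hschwarz : ‖ω y‖ ≤ ‖y‖ := Complex.norm_le_norm_of_mapsTo_ball hω
      (fun x hx => ball_subset_closedBall (hωmap x hx)) hω0 (mem_ball_zero_iff.mp hy)
    exact (ENNReal.ofReal_le_ofReal (sq_one_sub_sq_mul_norm_schwarzian_le hφ hf hf' hω hωmap hω0
      hsub hy hy0)).trans (ofReal_schwarzFAt_le_schwarzN hφ hschwarz (norm_pos_iff.mpr hy0)
      (mem_ball_zero_iff.mp hy))
  have hcont : ContinuousAt
      (fun y => ENNReal.ofReal ((1 - ‖y‖ ^ 2) ^ 2 * ‖schwarzian f y‖)) z := by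
    have hS := continuousAt_schwarzian hf isOpen_ball hz (hf' z hz)
    exact ENNReal.continuous_ofReal.continuousAt.comp (by fun_prop)
  exact ContinuousWithinAt.closure_le
    (mem_closure_ball_inter_compl_zero one_ne_zero (mem_ball_zero_iff.mp hz).le)
    hcont.continuousWithinAt continuousWithinAt_const hbound

/-- General Schwarzian norm estimate for the Ma–Minda class `K(φ)`:
if `1 + z f''/f'` is subordinate to `φ`, then `(1-|z|²)² |S_f(z)| ≤ N(φ)` on the disk. -/
theorem schwarzian_norm_le_of_MaMinda_convex (φ : ℂ → ℂ)
    (hφ : DifferentiableOn ℂ φ (ball (0:ℂ) 1)) (hφ0 : φ 0 = 1)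
    (f : ℂ → ℂ) (hf : DifferentiableOn ℂ f (ball (0:ℂ) 1))
    (hf0 : f 0 = 0) (hf1 : deriv f 0 = 1)
    (hf' : ∀ z ∈ ball (0:ℂ) 1, deriv f z ≠ 0)
    (ω : ℂ → ℂ) (hω : DifferentiableOn ℂ ω (ball (0:ℂ) 1))
    (hωmap : ∀ z ∈ ball (0:ℂ) 1, ω z ∈ ball (0:ℂ) 1) (hω0 : ω 0 = 0)
    (hsub : ∀ z ∈ ball (0:ℂ) 1,
      1 + z * deriv (deriv f) z / deriv f z = φ (ω z)) :
    ∀ z ∈ ball (0:ℂ) 1,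
      ENNReal.ofReal ((1 - ‖z‖ ^ 2) ^ 2 *
        ‖deriv (deriv (deriv f)) z / deriv f z
          - (3 / 2) * (deriv (deriv f) z / deriv f z) ^ 2‖) ≤ schwarzN φ :=
  schwarzian_norm_le_of_MaMinda_convex_general φ hφ f hf hf' ω hω hωmap hω0 hsub
end

section
/- For 0 < α ≤ 1, write P_α(z) = ((1+z)/(1−z))^α = 1 + Σ_{n≥1} a_n z^n for z in the unit disk. Then every Taylor coefficient satisfies 0 ≤ a_n ≤ 2α for n = 1, 2, 3, …. -/
/-!
`P = P_α` satisfies the linear ODE `(1 - z²) P' = 2α P` near `0`. Differentiating it `n + 1` times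
at `0` (Leibniz) shows that `a_n = P⁽ⁿ⁾(0) / n!` obeys `(n + 2) a_{n+2} = 2α a_{n+1} + n a_n` with
`a_0 = 1`, `a_1 = 2α`. Nonnegativity is then immediate, and if `n a_n ≤ 2α n` and
`a_{n+1} ≤ 2α ≤ 2`, the recurrence gives `(n + 2) a_{n+2} ≤ 4α + 2α n`, i.e. `a_{n+2} ≤ 2α`.
-/

open Complex Topology

noncomputable def cayleyPow (a z : ℂ) : ℂ := exp (a * log ((1 + z) / (1 - z)))

def cayleyPowCoeff {K : Type*} [Field K] (a : K) : ℕ → K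
  | 0 => 1
  | 1 => 2 * a
  | n + 2 => (2 * a * cayleyPowCoeff a (n + 1) + n * cayleyPowCoeff a n) / (n + 2)

section Coeff

variable {K : Type*} [Field K]

theorem cayleyPowCoeff_add_two [CharZero K] (a : K) (n : ℕ) :
    (n + 2) * cayleyPowCoeff a (n + 2) =
      2 * a * cayleyPowCoeff a (n + 1) + n * cayleyPowCoeff a n := by
  rw [cayleyPowCoeff, mul_div_cancel₀]
  exact_mod_cast (n + 1).succ_ne_zero

theorem map_cayleyPowCoeff {L : Type*} [Field L] (φ : K →+* L) (a : K) (n : ℕ) :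
    φ (cayleyPowCoeff a n) = cayleyPowCoeff (φ a) n := by
  induction n using Nat.twoStepInduction with
  | zero => simp [cayleyPowCoeff]
  | one => simp [cayleyPowCoeff, map_ofNat]
  | more n ih₀ ih₁ => simp [cayleyPowCoeff, ih₀, ih₁, map_ofNat]

variable [LinearOrder K] [IsStrictOrderedRing K] {a : K}

theorem cayleyPowCoeff_nonneg (ha : 0 ≤ a) (n : ℕ) : 0 ≤ cayleyPowCoeff a n := by
  induction n using Nat.twoStepInduction with
  | zero => simp [cayleyPowCoeff]
  | one => simp [cayleyPowCoeff, ha]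
  | more n ih₀ ih₁ => rw [cayleyPowCoeff]; positivity

theorem cayleyPowCoeff_le (ha₀ : 0 ≤ a) (ha₁ : a ≤ 1) {n : ℕ} (hn : 1 ≤ n) :
    cayleyPowCoeff a n ≤ 2 * a := by
  suffices ∀ n : ℕ, n * cayleyPowCoeff a n ≤ n * (2 * a) ∧ cayleyPowCoeff a (n + 1) ≤ 2 * a by
    obtain ⟨m, rfl⟩ := Nat.exists_eq_add_of_le' hn
    exact (this m).2
  intro n
  induction n with
  | zero => simp [cayleyPowCoeff]
  | succ n ih =>
    refine ⟨mul_le_mul_of_nonneg_left ih.2 n.succ.cast_nonneg, ?_⟩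
    have hpos : (0 : K) < n + 2 := by positivity
    refine le_of_mul_le_mul_left ?_ hpos
    calc (n + 2) * cayleyPowCoeff a (n + 2)
        = 2 * a * cayleyPowCoeff a (n + 1) + n * cayleyPowCoeff a n := cayleyPowCoeff_add_two a n
      _ ≤ 2 * a * 2 + n * (2 * a) :=
        add_le_add (mul_le_mul_of_nonneg_left (ih.2.trans (by linarith)) (by positivity)) ih.1
      _ = (n + 2) * (2 * a) := by ring

end Coeff

/-- For `m < 2` the factor `m * (m - 1)` vanishes, so the truncated `m - 2` is harmless. -/
theorem iteratedDeriv_sq_mul_apply_zero {𝕜 : Type*} [NontriviallyNormedField 𝕜] {g : 𝕜 → 𝕜}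
    {m : ℕ} (hg : ContDiffAt 𝕜 m g 0) :
    iteratedDeriv m (fun z => z ^ 2 * g z) 0 = m * (m - 1) * iteratedDeriv (m - 2) g 0 := by
  rw [iteratedDeriv_fun_mul (by fun_prop : ContDiffAt 𝕜 m (fun z : 𝕜 => z ^ 2) 0) hg]
  simp only [iteratedDeriv_fun_pow_zero, Nat.cast_ite, Nat.cast_zero, mul_ite, ite_mul, mul_zero,
    zero_mul, Finset.sum_ite_eq', Finset.mem_range]
  rcases m with _ | _ | k
  · simp
  · simp
  · have hchoose : (k + 2).choose 2 * 2 = (k + 2) * (k + 1) := by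
      rw [← Nat.add_one_mul_choose_eq, Nat.choose_one_right]
    rw [if_pos (by omega), Nat.factorial_two, ← Nat.cast_mul, hchoose]
    push_cast
    ring

theorem cayleyPow_zero (a : ℂ) : cayleyPow a 0 = 1 := by
  simp [cayleyPow]

theorem hasDerivAt_cayleyPow (a : ℂ) {z : ℂ} (hslit : (1 + z) / (1 - z) ∈ slitPlane) :
    HasDerivAt (cayleyPow a) (2 * a * cayleyPow a z / (1 - z ^ 2)) z := by
  have hz : 1 - z ≠ 0 := fun h => slitPlane_ne_zero hslit (by simp [h])
  have hz' : 1 + z ≠ 0 := fun h => slitPlane_ne_zero hslit (by simp [h])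
  have hquot : HasDerivAt (fun z => (1 + z) / (1 - z)) (2 / (1 - z) ^ 2) z :=
    (((hasDerivAt_id' z).const_add 1).div ((hasDerivAt_id' z).const_sub 1) hz).congr_deriv
      (by ring)
  refine (((hquot.clog hslit).const_mul a).cexp).congr_deriv ?_
  have hsq : 1 - z ^ 2 ≠ 0 := by
    rw [show 1 - z ^ 2 = (1 + z) * (1 - z) by ring]
    exact mul_ne_zero hz' hz
  rw [← cayleyPow]
  field_simp
  ring

theorem eventually_hasDerivAt_cayleyPow (a : ℂ) :
    ∀ᶠ z in 𝓝 0, HasDerivAt (cayleyPow a) (2 * a * cayleyPow a z / (1 - z ^ 2)) z := by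
  have hslit : ∀ᶠ z : ℂ in 𝓝 0, (1 + z) / (1 - z) ∈ slitPlane :=
    ((continuousAt_const.add continuousAt_id).div (continuousAt_const.sub continuousAt_id)
      (by simp)).eventually (isOpen_slitPlane.mem_nhds (by simp))
  exact hslit.mono fun z hz => hasDerivAt_cayleyPow a hz

theorem analyticAt_cayleyPow (a : ℂ) : AnalyticAt ℂ (cayleyPow a) 0 :=
  analyticAt_iff_eventually_differentiableAt.mpr
    ((eventually_hasDerivAt_cayleyPow a).mono fun _ h => h.differentiableAt)

theorem eventually_one_sub_sq_mul_deriv_cayleyPow (a : ℂ) :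
    ∀ᶠ z in 𝓝 0, (1 - z ^ 2) * deriv (cayleyPow a) z = 2 * a * cayleyPow a z := by
  have hne : ∀ᶠ z : ℂ in 𝓝 0, 1 - z ^ 2 ≠ 0 :=
    (continuous_const.sub (continuous_pow 2)).continuousAt.eventually_ne (by simp)
  filter_upwards [eventually_hasDerivAt_cayleyPow a, hne] with z hz hz'
  rw [hz.deriv]
  field_simp

theorem iteratedDeriv_cayleyPow_add_two (a : ℂ) (n : ℕ) :
    iteratedDeriv (n + 2) (cayleyPow a) 0 =
      2 * a * iteratedDeriv (n + 1) (cayleyPow a) 0 +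
        (n + 1) * n * iteratedDeriv n (cayleyPow a) 0 := by
  set P := cayleyPow a
  have hP : ContDiffAt ℂ (n + 1) P 0 := (analyticAt_cayleyPow a).contDiffAt
  have hP' : ContDiffAt ℂ (n + 1) (deriv P) 0 := (analyticAt_cayleyPow a).deriv.contDiffAt
  have hode : deriv P =ᶠ[𝓝 0] fun z => 2 * a * P z + z ^ 2 * deriv P z :=
    (eventually_one_sub_sq_mul_deriv_cayleyPow a).mono fun z hz => by linear_combination hz
  rw [iteratedDeriv_succ', hode.iteratedDeriv_eq,
    iteratedDeriv_fun_add (by fun_prop) (by fun_prop), iteratedDeriv_const_mul _ hP,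
    iteratedDeriv_sq_mul_apply_zero hP']
  rcases n with _ | n
  · simp
  · rw [show n + 1 + 1 - 2 = n by omega, ← iteratedDeriv_succ']
    push_cast
    ring

theorem iteratedDeriv_cayleyPow_apply_zero (a : ℂ) (n : ℕ) :
    iteratedDeriv n (cayleyPow a) 0 = n.factorial * cayleyPowCoeff a n := by
  induction n using Nat.twoStepInduction with
  | zero => simp [cayleyPow_zero, cayleyPowCoeff]
  | one =>
    simp [(eventually_hasDerivAt_cayleyPow a).self_of_nhds.deriv, cayleyPow_zero, cayleyPowCoeff]
  | more n ih₀ ih₁ =>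
    rw [iteratedDeriv_cayleyPow_add_two, ih₀, ih₁]
    push_cast [Nat.factorial_succ]
    linear_combination -(n + 1) * (n.factorial : ℂ) * cayleyPowCoeff_add_two a n

/-- Löwner-type coefficient bound: for `0 < α ≤ 1`, the Taylor coefficients `a_n`
(`n ≥ 1`) of `P_α(z) = ((1+z)/(1-z))^α = 1 + Σ a_n zⁿ` satisfy `0 ≤ a_n ≤ 2α`.
Here `a_n` is encoded via `iteratedDeriv n P_α 0 = n! * a_n`. -/
theorem Palpha_coeff_le (α : ℝ) (hα0 : 0 < α) (hα1 : α ≤ 1) (n : ℕ) (hn : 1 ≤ n) :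
    ∃ r : ℝ, 0 ≤ r ∧ r ≤ 2 * α ∧
      iteratedDeriv n
        (fun z : ℂ => Complex.exp ((α : ℂ) * Complex.log ((1 + z) / (1 - z)))) 0
        = (n.factorial : ℂ) * (r : ℂ) := by
  refine ⟨cayleyPowCoeff α n, cayleyPowCoeff_nonneg hα0.le n, cayleyPowCoeff_le hα0.le hα1 hn, ?_⟩
  have hcast : ((cayleyPowCoeff α n : ℝ) : ℂ) = cayleyPowCoeff (α : ℂ) n :=
    map_cayleyPowCoeff Complex.ofRealHom α n
  rw [hcast]
  exact iteratedDeriv_cayleyPow_apply_zero α n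
end
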